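/- arXiv:1905.04012 — 3 statements merged into one kernel-verified Lean document; each statement's English description precedes it below -/
import Mathlib

section
/- Let n ≥ 1 be an integer and l ≥ 0 a real number. Suppose u₀ ∈ H^{l+1}(ℝⁿ) and u₁ ∈ H^{l}(ℝⁿ). Then there exists a constant C > 0, depending only on n and l, such that for all t ≥ 0, ∫_{|ξ| ≥ 1} | û(t,ξ) − ( û₁(ξ)·e^{−t/(2|ξ|²)}·sin(t|ξ|)/|ξ| + û₀(ξ)·e^{−t/(2|ξ|²)}·cos(t|ξ|) ) |² dξ ≤ C·( ‖u₁‖²_{H^l} + ‖u₀‖²_{H^{l+1}} )·(1+t)^{−l−3}. -/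
open MeasureTheory Real Set

noncomputable section

namespace DampedPlate

variable {n : ℕ}

/-- `ℝⁿ` as a Euclidean space. -/
abbrev Rn (n : ℕ) := EuclideanSpace ℝ (Fin n)

/-- The Fourier transform `f̂(ξ) = ∫ f(x) e^{-i ξ·x} dx` of a real-valued function. -/
def ftr (f : Rn n → ℝ) (ξ : Rn n) : ℂ :=
  ∫ x : Rn n, (f x : ℂ) * Complex.exp (-Complex.I * ((inner ℝ ξ x : ℝ) : ℂ))

/-- The multiplier `E₀(t,ξ)`. -/
def E0 (ζ t : ℝ) (ξ : Rn n) : ℝ :=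
  if ζ < ‖ξ‖ then
    Real.exp (-t / (2 * (1 + ‖ξ‖ ^ 2))) *
      Real.cos (t * Real.sqrt (4 * ‖ξ‖ ^ 2 * (1 + ‖ξ‖ ^ 2) ^ 2 - 1) / (2 * (1 + ‖ξ‖ ^ 2)))
  else
    Real.exp (-t / (2 * (1 + ‖ξ‖ ^ 2))) *
      Real.cosh (t * Real.sqrt (1 - 4 * ‖ξ‖ ^ 2 * (1 + ‖ξ‖ ^ 2) ^ 2) / (2 * (1 + ‖ξ‖ ^ 2)))

/-- The multiplier `E₁(t,ξ)`. -/
def E1 (ζ t : ℝ) (ξ : Rn n) : ℝ :=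
  if ζ < ‖ξ‖ then
    Real.exp (-t / (2 * (1 + ‖ξ‖ ^ 2))) *
      (Real.sin (t * Real.sqrt (4 * ‖ξ‖ ^ 2 * (1 + ‖ξ‖ ^ 2) ^ 2 - 1) / (2 * (1 + ‖ξ‖ ^ 2))) /
        (Real.sqrt (4 * ‖ξ‖ ^ 2 * (1 + ‖ξ‖ ^ 2) ^ 2 - 1) / (2 * (1 + ‖ξ‖ ^ 2))))
  else
    Real.exp (-t / (2 * (1 + ‖ξ‖ ^ 2))) *
      (Real.sinh (t * Real.sqrt (1 - 4 * ‖ξ‖ ^ 2 * (1 + ‖ξ‖ ^ 2) ^ 2) / (2 * (1 + ‖ξ‖ ^ 2))) /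
        (Real.sqrt (1 - 4 * ‖ξ‖ ^ 2 * (1 + ‖ξ‖ ^ 2) ^ 2) / (2 * (1 + ‖ξ‖ ^ 2))))

/-- The Fourier transform of the solution, expressed in terms of the Fourier transforms
`v₀ = û₀`, `v₁ = û₁` of the initial data:
`û(t,ξ) = û₀(ξ)E₀(t,ξ) + (û₁(ξ) + û₀(ξ)/(2(1+|ξ|²))) E₁(t,ξ)`. -/
def uhatC (ζ : ℝ) (v₀ v₁ : Rn n → ℂ) (t : ℝ) (ξ : Rn n) : ℂ :=
  v₀ ξ * ((E0 ζ t ξ : ℝ) : ℂ) +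
    (v₁ ξ + v₀ ξ * (((1 : ℝ) / (2 * (1 + ‖ξ‖ ^ 2)) : ℝ) : ℂ)) * ((E1 ζ t ξ : ℝ) : ℂ)

/-- The Fourier transform of the solution of the damped plate equation with data `u₀, u₁`. -/
def uhat (ζ : ℝ) (u₀ u₁ : Rn n → ℝ) (t : ℝ) (ξ : Rn n) : ℂ :=
  uhatC ζ (ftr u₀) (ftr u₁) t ξ

/-- The wave-like profile
`û₁(ξ) e^{-t/(2|ξ|²)} sin(t|ξ|)/|ξ| + û₀(ξ) e^{-t/(2|ξ|²)} cos(t|ξ|)`,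
in terms of the Fourier transforms of the data. -/
def waveC (v₀ v₁ : Rn n → ℂ) (t : ℝ) (ξ : Rn n) : ℂ :=
  v₁ ξ * ((Real.exp (-t / (2 * ‖ξ‖ ^ 2)) * (Real.sin (t * ‖ξ‖) / ‖ξ‖) : ℝ) : ℂ) +
    v₀ ξ * ((Real.exp (-t / (2 * ‖ξ‖ ^ 2)) * Real.cos (t * ‖ξ‖) : ℝ) : ℂ)

/-- The wave-like profile for real data `u₀, u₁`. -/
def wave (u₀ u₁ : Rn n → ℝ) (t : ℝ) (ξ : Rn n) : ℂ := waveC (ftr u₀) (ftr u₁) t ξ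

/-- Membership in `H^l`, expressed on the Fourier side. -/
def MemHC (l : ℝ) (v : Rn n → ℂ) : Prop :=
  Integrable fun ξ : Rn n => (1 + ‖ξ‖ ^ 2) ^ l * ‖v ξ‖ ^ 2

/-- The `H^l` norm, expressed on the Fourier side. -/
def HNormC (l : ℝ) (v : Rn n → ℂ) : ℝ :=
  (∫ ξ : Rn n, (1 + ‖ξ‖ ^ 2) ^ l * ‖v ξ‖ ^ 2) ^ ((1 : ℝ) / 2)

/-- `f ∈ H^l(ℝⁿ)`. -/
def MemH (l : ℝ) (f : Rn n → ℝ) : Prop := MemHC l (ftr f)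

/-- `‖f‖_{H^l}`. -/
def HNorm (l : ℝ) (f : Rn n → ℝ) : ℝ := HNormC l (ftr f)

/-- `‖f‖_{1,1} = ∫ (1+|x|)|f(x)| dx`. -/
def Norm11 (f : Rn n → ℝ) : ℝ := ∫ x : Rn n, (1 + ‖x‖) * |f x|

/-- `f ∈ L^{1,1}(ℝⁿ)`. -/
def MemL11 (f : Rn n → ℝ) : Prop :=
  Integrable f ∧ Integrable fun x : Rn n => (1 + ‖x‖) * |f x|

/-- `P_j = ∫ u_j(x) dx`. -/
def Pint (f : Rn n → ℝ) : ℝ := ∫ x : Rn n, f x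

/-- `I₀ = ‖u₁‖_{H^l} + ‖u₀‖_{H^{l+1}} + ‖u₁‖_{1,1} + ‖u₀‖_{1,1}`. -/
def I0 (l : ℝ) (u₀ u₁ : Rn n → ℝ) : ℝ :=
  HNorm l u₁ + HNorm (l + 1) u₀ + Norm11 u₁ + Norm11 u₀

/-- The heat-like profile `(P₁ + P₀) e^{-t|ξ|²}`. -/
def heat (u₀ u₁ : Rn n → ℝ) (t : ℝ) (ξ : Rn n) : ℂ :=
  (((Pint u₁ + Pint u₀) * Real.exp (-t * ‖ξ‖ ^ 2) : ℝ) : ℂ)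

/-- `ζ` is the unique number in `(0,1)` with `4ζ²(1+ζ²)² = 1`. -/
def zetaCond (ζ : ℝ) : Prop := 0 < ζ ∧ ζ < 1 ∧ 4 * ζ ^ 2 * (1 + ζ ^ 2) ^ 2 = 1

end DampedPlate

open DampedPlate

/-! For `r = |ξ| ≥ 1 > ζ` both multipliers oscillate with frequency
`ω = √(4r²(1+r²)²-1)/(2(1+r²))`, and `r² - ω² = 1/(4(1+r²)²)` gives `0 ≤ r - ω ≤ 1/(4r⁵)`,
while `e^{-t/(2(1+r²))} - e^{-t/(2r²)} ≤ e^{-t/(2(1+r²))} t/(2r⁴)`. Comparing phases and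
amplitudes term by term, with `E = e^{-t/(2(1+r²))}`, the multiplier of `û₁` differs from the
wave profile by `O((1+t) E r⁻⁵)` and that of `û₀` by `O((1+t) E r⁻⁴ + E r⁻³)`.
Trading `e^{-t/P}` for `((κ+1)P)^κ (1+t)^{-κ}` turns these into pointwise bounds by the
`H^l` and `H^{l+1}` weights times `(1+t)^{-l-3}`, which integrate to the estimate. -/

namespace DampedPlate

def dampedFreq (r : ℝ) : ℝ := √(4 * r ^ 2 * (1 + r ^ 2) ^ 2 - 1) / (2 * (1 + r ^ 2))

section Frequency

variable {r : ℝ}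

lemma dampedFreq_nonneg (r : ℝ) : 0 ≤ dampedFreq r := by
  unfold dampedFreq; positivity

lemma dampedFreq_sq (hr : 1 ≤ r) : dampedFreq r ^ 2 = r ^ 2 - 1 / (4 * (1 + r ^ 2) ^ 2) := by
  have hrad : 0 ≤ 4 * r ^ 2 * (1 + r ^ 2) ^ 2 - 1 := by
    nlinarith [one_le_pow₀ (n := 2) hr, one_le_pow₀ (n := 2) (by nlinarith : (1 : ℝ) ≤ 1 + r ^ 2)]
  rw [dampedFreq, div_pow, sq_sqrt hrad]
  field_simp
  ring

lemma dampedFreq_le (hr : 1 ≤ r) : dampedFreq r ≤ r := by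
  rw [← pow_le_pow_iff_left₀ (dampedFreq_nonneg r) (by linarith) two_ne_zero, dampedFreq_sq hr]
  have : 0 ≤ 1 / (4 * (1 + r ^ 2) ^ 2) := by positivity
  linarith

lemma half_le_dampedFreq (hr : 1 ≤ r) : r / 2 ≤ dampedFreq r := by
  rw [← pow_le_pow_iff_left₀ (by linarith) (dampedFreq_nonneg r) two_ne_zero, dampedFreq_sq hr]
  have : 1 / (4 * (1 + r ^ 2) ^ 2) ≤ 1 / 4 := by
    gcongr; nlinarith [one_le_pow₀ (n := 2) (by nlinarith : (1 : ℝ) ≤ 1 + r ^ 2)]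
  nlinarith

lemma sub_dampedFreq_le (hr : 1 ≤ r) : r - dampedFreq r ≤ 1 / (4 * r ^ 5) := by
  have hω := dampedFreq_nonneg r
  have hdiff : (r - dampedFreq r) * ((r + dampedFreq r) * (4 * (1 + r ^ 2) ^ 2)) = 1 := by
    have := dampedFreq_sq hr
    field_simp at this
    linear_combination -this
  have h4 : 4 * r ^ 5 ≤ (r + dampedFreq r) * (4 * (1 + r ^ 2) ^ 2) := by
    have : r ^ 4 ≤ (1 + r ^ 2) ^ 2 := by nlinarith
    nlinarith [pow_nonneg (by linarith : (0:ℝ) ≤ r) 4]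
  rw [le_div_iff₀ (by positivity)]
  nlinarith [dampedFreq_le hr]

end Frequency

lemma exp_neg_sub_exp_neg_le (x y : ℝ) : exp (-x) - exp (-y) ≤ exp (-x) * (y - x) := by
  have := one_sub_le_exp_neg (y - x)
  have hsplit : exp (-y) = exp (-x) * exp (-(y - x)) := by rw [← exp_add]; ring_nf
  rw [hsplit]
  nlinarith [exp_pos (-x)]

lemma abs_mul_sub_mul_le {g : ℝ → ℝ} (hg : ∀ x, |g x| ≤ 1)
    (hg' : ∀ x y, |g x - g y| ≤ |x - y|) {E F : ℝ} (hF : 0 ≤ F) (hFE : F ≤ E) (x y a b : ℝ) :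
    |E * (g x * a) - F * (g y * b)| ≤ (E - F) * |a| + F * |a| * |x - y| + F * |a - b| := by
  have hsplit : E * (g x * a) - F * (g y * b) =
      (E - F) * g x * a + F * (g x - g y) * a + F * g y * (a - b) := by ring
  rw [hsplit]
  have hEF : 0 ≤ E - F := sub_nonneg.2 hFE
  refine (abs_add_three _ _ _).trans (add_le_add (add_le_add ?_ ?_) ?_) <;>
    simp only [abs_mul, abs_of_nonneg hF, abs_of_nonneg hEF]
  · nlinarith [hg x, mul_nonneg hEF (abs_nonneg a)]
  · nlinarith [hg' x y, mul_nonneg hF (abs_nonneg a)]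
  · nlinarith [hg y, mul_nonneg hF (abs_nonneg (a - b))]

section Multipliers

variable {r t : ℝ}

lemma exp_neg_div_sq_le (hr : 0 < r) (ht : 0 ≤ t) :
    exp (-t / (2 * r ^ 2)) ≤ exp (-t / (2 * (1 + r ^ 2))) := by
  gcongr exp ?_
  rw [neg_div, neg_div, neg_le_neg_iff]
  gcongr; nlinarith

lemma exp_neg_div_sub_exp_neg_div_sq_le (hr : 0 < r) (ht : 0 ≤ t) :
    exp (-t / (2 * (1 + r ^ 2))) - exp (-t / (2 * r ^ 2)) ≤
      exp (-t / (2 * (1 + r ^ 2))) * (t / (2 * r ^ 4)) := by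
  have key := exp_neg_sub_exp_neg_le (t / (2 * (1 + r ^ 2))) (t / (2 * r ^ 2))
  rw [neg_div, neg_div]
  refine key.trans (mul_le_mul_of_nonneg_left ?_ (exp_pos _).le)
  rw [div_sub_div _ _ (by positivity) (by positivity), div_le_div_iff₀ (by positivity) (by positivity)]
  nlinarith [mul_nonneg ht (pow_nonneg hr.le 6)]

lemma abs_mul_dampedFreq_sub_mul_le (hr : 1 ≤ r) (ht : 0 ≤ t) :
    |t * dampedFreq r - t * r| ≤ t / (4 * r ^ 5) := by
  rw [← mul_sub, abs_mul, abs_of_nonneg ht, abs_of_nonpos (by linarith [dampedFreq_le hr]),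
    neg_sub]
  calc t * (r - dampedFreq r) ≤ t * (1 / (4 * r ^ 5)) := by gcongr; exact sub_dampedFreq_le hr
    _ = t / (4 * r ^ 5) := by ring

lemma abs_sin_multiplier_sub_le (hr : 1 ≤ r) (ht : 0 ≤ t) :
    |exp (-t / (2 * (1 + r ^ 2))) * (sin (t * dampedFreq r) / dampedFreq r) -
        exp (-t / (2 * r ^ 2)) * (sin (t * r) / r)| ≤
      2 * (1 + t) * exp (-t / (2 * (1 + r ^ 2))) / r ^ 5 := by
  set ω := dampedFreq r
  set E := exp (-t / (2 * (1 + r ^ 2)))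
  set F := exp (-t / (2 * r ^ 2))
  have hr0 : 0 < r := by linarith
  have hω : r / 2 ≤ ω := half_le_dampedFreq hr
  have hωr : ω ≤ r := dampedFreq_le hr
  have hgap : r - ω ≤ 1 / (4 * r ^ 5) := sub_dampedFreq_le hr
  have hω0 : 0 < ω := by linarith
  have hFE : F ≤ E := exp_neg_div_sq_le hr0 ht
  have hEF : E - F ≤ E * (t / (2 * r ^ 4)) := exp_neg_div_sub_exp_neg_div_sq_le hr0 ht
  have hE : 0 < E := exp_pos _
  have hF : 0 < F := exp_pos _
  have hinv : |ω⁻¹| ≤ 2 / r := by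
    rw [abs_of_pos (inv_pos.2 hω0), inv_eq_one_div, div_le_div_iff₀ hω0 hr0]; linarith
  have hphase : |t * ω - t * r| ≤ t / (4 * r ^ 5) := abs_mul_dampedFreq_sub_mul_le hr ht
  have hinvsub : |ω⁻¹ - r⁻¹| ≤ 1 / (2 * r ^ 7) := by
    rw [inv_sub_inv hω0.ne' hr0.ne', abs_div, abs_of_nonneg (by linarith),
      abs_of_pos (by positivity), div_le_div_iff₀ (by positivity) (by positivity)]
    have := (le_div_iff₀ (by positivity)).1 hgap
    nlinarith [mul_le_mul_of_nonneg_right this (sq_nonneg r)]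
  have hr5 : r ^ 5 ≤ r ^ 6 := pow_le_pow_right₀ hr (by norm_num)
  have hr7 : r ^ 5 ≤ r ^ 7 := pow_le_pow_right₀ hr (by norm_num)
  rw [div_eq_mul_inv, div_eq_mul_inv]
  calc _ ≤ (E - F) * |ω⁻¹| + F * |ω⁻¹| * |t * ω - t * r| + F * |ω⁻¹ - r⁻¹| :=
        abs_mul_sub_mul_le abs_sin_le_one abs_sin_sub_sin_le hF.le hFE _ _ _ _
    _ ≤ E * (t / (2 * r ^ 4)) * (2 / r) + E * (2 / r) * (t / (4 * r ^ 5)) +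
          E * (1 / (2 * r ^ 7)) := by gcongr
    _ = E * (t / r ^ 5 + t / (2 * r ^ 6) + 1 / (2 * r ^ 7)) := by field_simp; ring
    _ ≤ E * (t / r ^ 5 + t / (2 * r ^ 5) + 1 / (2 * r ^ 5)) := by gcongr
    _ ≤ 2 * (1 + t) * E / r ^ 5 := by
        rw [mul_div_assoc, ← sub_nonneg]; field_simp; nlinarith

lemma abs_cos_multiplier_sub_le (hr : 1 ≤ r) (ht : 0 ≤ t) :
    |exp (-t / (2 * (1 + r ^ 2))) * cos (t * dampedFreq r) +
        1 / (2 * (1 + r ^ 2)) *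
          (exp (-t / (2 * (1 + r ^ 2))) * (sin (t * dampedFreq r) / dampedFreq r)) -
        exp (-t / (2 * r ^ 2)) * cos (t * r)| ≤
      (1 + t) * exp (-t / (2 * (1 + r ^ 2))) / r ^ 4 +
        exp (-t / (2 * (1 + r ^ 2))) / (r * (1 + r ^ 2)) := by
  set ω := dampedFreq r
  set E := exp (-t / (2 * (1 + r ^ 2)))
  set F := exp (-t / (2 * r ^ 2))
  have hr0 : 0 < r := by linarith
  have hω : r / 2 ≤ ω := half_le_dampedFreq hr
  have hω0 : 0 < ω := by linarith
  have hFE : F ≤ E := exp_neg_div_sq_le hr0 ht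
  have hEF : E - F ≤ E * (t / (2 * r ^ 4)) := exp_neg_div_sub_exp_neg_div_sq_le hr0 ht
  have hE : 0 < E := exp_pos _
  have hF : 0 < F := exp_pos _
  have hphase : |t * ω - t * r| ≤ t / (4 * r ^ 5) := abs_mul_dampedFreq_sub_mul_le hr ht
  have hcos : |E * cos (t * ω) - F * cos (t * r)| ≤ (1 + t) * E / r ^ 4 := by
    have hr4 : r ^ 4 ≤ r ^ 5 := pow_le_pow_right₀ hr (by norm_num)
    calc _ = |E * (cos (t * ω) * 1) - F * (cos (t * r) * 1)| := by simp only [mul_one]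
      _ ≤ (E - F) * |1| + F * |1| * |t * ω - t * r| + F * |1 - 1| :=
        abs_mul_sub_mul_le abs_cos_le_one abs_cos_sub_cos_le hF.le hFE _ _ _ _
      _ ≤ E * (t / (2 * r ^ 4)) + E * (t / (4 * r ^ 4)) := by
        simp only [abs_one, mul_one, sub_self, abs_zero, mul_zero, add_zero]
        gcongr
        exact hphase.trans (by gcongr)
      _ ≤ (1 + t) * E / r ^ 4 := by
        rw [← sub_nonneg]; field_simp; nlinarith
  have hsin : |1 / (2 * (1 + r ^ 2)) * (E * (sin (t * ω) / ω))| ≤ E / (r * (1 + r ^ 2)) := by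
    rw [abs_mul, abs_of_nonneg (by positivity : 0 ≤ 1 / (2 * (1 + r ^ 2))), abs_mul, abs_div,
      abs_of_pos hE, abs_of_pos hω0]
    calc 1 / (2 * (1 + r ^ 2)) * (E * (|sin (t * ω)| / ω))
        ≤ 1 / (2 * (1 + r ^ 2)) * (E * (1 / (r / 2))) := by
          gcongr
          exact abs_sin_le_one _
      _ = E / (r * (1 + r ^ 2)) := by field_simp
  calc _ = |(E * cos (t * ω) - F * cos (t * r)) +
          1 / (2 * (1 + r ^ 2)) * (E * (sin (t * ω) / ω))| := by
        congr 1; ring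
    _ ≤ _ := (abs_add_le _ _).trans (add_le_add hcos hsin)

end Multipliers

section Decay

variable {κ P t : ℝ}

lemma one_add_rpow_mul_exp_neg_div_le (hκ : 0 ≤ κ) (hP : 1 ≤ P) (ht : 0 ≤ t) :
    (1 + t) ^ κ * exp (-t / P) ≤ ((κ + 1) * P) ^ κ := by
  have hP0 : 0 < P := by linarith
  have hκP : 0 < (κ + 1) * P := by positivity
  have hlin : 1 + t ≤ (κ + 1) * P * exp (t / ((κ + 1) * P)) := by
    calc 1 + t ≤ (κ + 1) * P * (t / ((κ + 1) * P) + 1) := by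
          rw [mul_add, mul_div_cancel₀ _ hκP.ne', mul_one]; nlinarith
      _ ≤ (κ + 1) * P * exp (t / ((κ + 1) * P)) := by gcongr; exact add_one_le_exp _
  have hexp : exp (t / ((κ + 1) * P)) ^ κ * exp (-t / P) ≤ 1 := by
    rw [← exp_mul, ← exp_add, exp_le_one_iff, neg_div, ← sub_eq_add_neg, sub_nonpos,
      div_mul_eq_mul_div, div_le_div_iff₀ hκP hP0]
    nlinarith [mul_nonneg ht hP0.le]
  calc (1 + t) ^ κ * exp (-t / P)
      ≤ ((κ + 1) * P * exp (t / ((κ + 1) * P))) ^ κ * exp (-t / P) := by gcongr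
    _ = ((κ + 1) * P) ^ κ * (exp (t / ((κ + 1) * P)) ^ κ * exp (-t / P)) := by
        rw [mul_rpow hκP.le (exp_pos _).le, mul_assoc]
    _ ≤ ((κ + 1) * P) ^ κ := mul_le_of_le_one_right (by positivity) hexp

lemma pow_mul_exp_neg_div_le (hκ : 0 ≤ κ) (hP : 1 ≤ P) (ht : 0 ≤ t) (m : ℕ) :
    (1 + t) ^ m * exp (-t / P) ≤ (κ + 1) ^ κ * P ^ κ * (1 + t) ^ ((m : ℝ) - κ) := by
  have ht1 : 0 < 1 + t := by linarith
  rw [← mul_rpow (by linarith) (by linarith)]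
  have hsplit : (1 + t) ^ m = (1 + t) ^ κ * (1 + t) ^ ((m : ℝ) - κ) := by
    rw [← rpow_add ht1, add_sub_cancel, rpow_natCast]
  rw [hsplit, mul_right_comm]
  gcongr
  exact one_add_rpow_mul_exp_neg_div_le hκ hP ht

end Decay

section Weighted

variable {l r t : ℝ}

lemma exp_neg_div_two_mul_sq (t w : ℝ) : exp (-t / (2 * w)) ^ 2 = exp (-t / w) := by
  rw [← exp_nat_mul]; congr 1; field_simp; ring

lemma one_add_sq_le_two_mul_sq (hr : 1 ≤ r) : 1 + r ^ 2 ≤ 2 * r ^ 2 := by nlinarith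

lemma sin_multiplier_sub_sq_le (hl : -5 ≤ l) (hr : 1 ≤ r) (ht : 0 ≤ t) :
    (exp (-t / (2 * (1 + r ^ 2))) * (sin (t * dampedFreq r) / dampedFreq r) -
        exp (-t / (2 * r ^ 2)) * (sin (t * r) / r)) ^ 2 ≤
      128 * (l + 6) ^ (l + 5) * (1 + r ^ 2) ^ l * (1 + t) ^ (-l - 3) := by
  set w := 1 + r ^ 2
  have hw : 1 ≤ w := by nlinarith
  have hw0 : 0 < w := by linarith
  have hr10 : w ^ 5 ≤ 32 * r ^ 10 := by
    calc w ^ 5 ≤ (2 * r ^ 2) ^ 5 := by gcongr; exact one_add_sq_le_two_mul_sq hr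
      _ = 32 * r ^ 10 := by ring
  have hw5 : w ^ (l + 5) = w ^ l * w ^ 5 := by
    rw [show l + 5 = l + ((5 : ℕ) : ℝ) by norm_num, rpow_add_natCast hw0.ne']
  have hdecay := pow_mul_exp_neg_div_le (κ := l + 5) (by linarith) hw ht 2
  rw [show (l + 5) + 1 = l + 6 by ring, show ((2 : ℕ) : ℝ) - (l + 5) = -l - 3 by push_cast; ring,
    hw5] at hdecay
  calc _ = |_| ^ 2 := (sq_abs _).symm
    _ ≤ (2 * (1 + t) * exp (-t / (2 * w)) / r ^ 5) ^ 2 := by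
        gcongr; exact abs_sin_multiplier_sub_le hr ht
    _ = 4 * ((1 + t) ^ 2 * exp (-t / w)) / r ^ 10 := by
        rw [div_pow, mul_pow, mul_pow, exp_neg_div_two_mul_sq]; ring
    _ ≤ 4 * ((l + 6) ^ (l + 5) * (w ^ l * w ^ 5) * (1 + t) ^ (-l - 3)) / (w ^ 5 / 32) := by
        have : 0 ≤ (l + 6) ^ (l + 5) := rpow_nonneg (by linarith) _
        gcongr
        linarith
    _ = _ := by field_simp; ring

lemma cos_multiplier_sub_sq_le (hl : -3 ≤ l) (hr : 1 ≤ r) (ht : 0 ≤ t) :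
    (exp (-t / (2 * (1 + r ^ 2))) * cos (t * dampedFreq r) +
        1 / (2 * (1 + r ^ 2)) *
          (exp (-t / (2 * (1 + r ^ 2))) * (sin (t * dampedFreq r) / dampedFreq r)) -
        exp (-t / (2 * r ^ 2)) * cos (t * r)) ^ 2 ≤
      (32 * (l + 6) ^ (l + 5) + 4 * (l + 4) ^ (l + 3)) * (1 + r ^ 2) ^ (l + 1) *
        (1 + t) ^ (-l - 3) := by
  set w := 1 + r ^ 2
  have hw : 1 ≤ w := by nlinarith
  have hw0 : 0 < w := by linarith
  have hr0 : 0 < r := by linarith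
  have hr2 := one_add_sq_le_two_mul_sq hr
  have hdecay₂ := pow_mul_exp_neg_div_le (κ := l + 5) (by linarith) hw ht 2
  have hw5 : w ^ (l + 5) = w ^ (l + 1) * w ^ 4 := by
    rw [show l + 5 = (l + 1) + ((4 : ℕ) : ℝ) by push_cast; ring, rpow_add_natCast hw0.ne']
  rw [show (l + 5) + 1 = l + 6 by ring, show ((2 : ℕ) : ℝ) - (l + 5) = -l - 3 by push_cast; ring,
    hw5] at hdecay₂
  have hdecay₀ := pow_mul_exp_neg_div_le (κ := l + 3) (by linarith) hw ht 0
  have hw3 : w ^ (l + 3) = w ^ l * w ^ 3 := by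
    rw [show l + 3 = l + ((3 : ℕ) : ℝ) by norm_num, rpow_add_natCast hw0.ne']
  rw [show (l + 3) + 1 = l + 4 by ring, show ((0 : ℕ) : ℝ) - (l + 3) = -l - 3 by push_cast; ring,
    hw3, pow_zero, one_mul] at hdecay₀
  have hc₂ : 0 ≤ (l + 6) ^ (l + 5) := rpow_nonneg (by linarith) _
  have hc₀ : 0 ≤ (l + 4) ^ (l + 3) := rpow_nonneg (by linarith) _
  have hwl : w ^ l ≤ w ^ (l + 1) := rpow_le_rpow_of_exponent_le hw (by linarith)
  have hτ : 0 ≤ (1 + t) ^ (-l - 3) := rpow_nonneg (by linarith) _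
  have hfirst : ((1 + t) * exp (-t / (2 * w)) / r ^ 4) ^ 2 ≤
      16 * (l + 6) ^ (l + 5) * w ^ (l + 1) * (1 + t) ^ (-l - 3) := by
    calc _ = (1 + t) ^ 2 * exp (-t / w) / (r ^ 2) ^ 4 := by
          rw [div_pow, mul_pow, exp_neg_div_two_mul_sq]; ring
      _ ≤ (l + 6) ^ (l + 5) * (w ^ (l + 1) * w ^ 4) * (1 + t) ^ (-l - 3) /
            (w / 2) ^ 4 := by
          gcongr; linarith
      _ = _ := by field_simp; ring
  have hsecond : (exp (-t / (2 * w)) / (r * w)) ^ 2 ≤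
      2 * (l + 4) ^ (l + 3) * w ^ (l + 1) * (1 + t) ^ (-l - 3) := by
    calc _ = exp (-t / w) / (r ^ 2 * w ^ 2) := by
          rw [div_pow, mul_pow, exp_neg_div_two_mul_sq]
      _ ≤ (l + 4) ^ (l + 3) * (w ^ l * w ^ 3) * (1 + t) ^ (-l - 3) /
            (w / 2 * w ^ 2) := by
          gcongr; linarith
      _ = 2 * (l + 4) ^ (l + 3) * w ^ l * (1 + t) ^ (-l - 3) := by field_simp
      _ ≤ _ := by gcongr
  calc _ = |_| ^ 2 := (sq_abs _).symm
    _ ≤ ((1 + t) * exp (-t / (2 * w)) / r ^ 4 + exp (-t / (2 * w)) / (r * w)) ^ 2 := by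
        gcongr; exact abs_cos_multiplier_sub_le hr ht
    _ ≤ 2 * (((1 + t) * exp (-t / (2 * w)) / r ^ 4) ^ 2 + (exp (-t / (2 * w)) / (r * w)) ^ 2) :=
        add_sq_le
    _ ≤ _ := by nlinarith

end Weighted

section FourierSide

variable {n : ℕ} {ζ l t : ℝ} {ξ : Rn n}

lemma E0_of_lt (h : ζ < ‖ξ‖) :
    E0 ζ t ξ = exp (-t / (2 * (1 + ‖ξ‖ ^ 2))) * cos (t * dampedFreq ‖ξ‖) := by
  simp only [E0, if_pos h, dampedFreq, mul_div_assoc]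

lemma E1_of_lt (h : ζ < ‖ξ‖) :
    E1 ζ t ξ = exp (-t / (2 * (1 + ‖ξ‖ ^ 2))) *
      (sin (t * dampedFreq ‖ξ‖) / dampedFreq ‖ξ‖) := by
  simp only [E1, if_pos h, dampedFreq, mul_div_assoc]

lemma uhatC_sub_waveC (v₀ v₁ : Rn n → ℂ) :
    uhatC ζ v₀ v₁ t ξ - waveC v₀ v₁ t ξ =
      v₀ ξ * ((E0 ζ t ξ + 1 / (2 * (1 + ‖ξ‖ ^ 2)) * E1 ζ t ξ -
          exp (-t / (2 * ‖ξ‖ ^ 2)) * cos (t * ‖ξ‖) : ℝ) : ℂ) +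
        v₁ ξ * ((E1 ζ t ξ - exp (-t / (2 * ‖ξ‖ ^ 2)) * (sin (t * ‖ξ‖) / ‖ξ‖) : ℝ) : ℂ) := by
  simp only [uhatC, waveC]
  push_cast
  ring

def highFreqConst (l : ℝ) : ℝ := 2 * (160 * (l + 6) ^ (l + 5) + 4 * (l + 4) ^ (l + 3))

lemma highFreqConst_pos (hl : -3 ≤ l) : 0 < highFreqConst l := by
  have := rpow_pos_of_pos (by linarith : (0 : ℝ) < l + 6) (l + 5)
  have := rpow_pos_of_pos (by linarith : (0 : ℝ) < l + 4) (l + 3)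
  unfold highFreqConst; positivity

lemma norm_uhatC_sub_waveC_sq_le (hl : -3 ≤ l) (hζ : ζ < 1) (hξ : 1 ≤ ‖ξ‖) (ht : 0 ≤ t)
    (v₀ v₁ : Rn n → ℂ) :
    ‖uhatC ζ v₀ v₁ t ξ - waveC v₀ v₁ t ξ‖ ^ 2 ≤
      highFreqConst l * ((1 + ‖ξ‖ ^ 2) ^ l * ‖v₁ ξ‖ ^ 2 +
        (1 + ‖ξ‖ ^ 2) ^ (l + 1) * ‖v₀ ξ‖ ^ 2) * (1 + t) ^ (-l - 3) := by
  have hlt : ζ < ‖ξ‖ := hζ.trans_le hξ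
  have hc₆ := rpow_pos_of_pos (by linarith : (0 : ℝ) < l + 6) (l + 5)
  have hc₄ := rpow_pos_of_pos (by linarith : (0 : ℝ) < l + 4) (l + 3)
  have hτ := rpow_nonneg (by linarith : (0 : ℝ) ≤ 1 + t) (-l - 3)
  have hw := rpow_nonneg (by positivity : (0 : ℝ) ≤ 1 + ‖ξ‖ ^ 2) l
  have hw₁ := rpow_nonneg (by positivity : (0 : ℝ) ≤ 1 + ‖ξ‖ ^ 2) (l + 1)
  set c := 160 * (l + 6) ^ (l + 5) + 4 * (l + 4) ^ (l + 3)
  have h₀ : (E0 ζ t ξ + 1 / (2 * (1 + ‖ξ‖ ^ 2)) * E1 ζ t ξ -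
      exp (-t / (2 * ‖ξ‖ ^ 2)) * cos (t * ‖ξ‖)) ^ 2 ≤
        c * (1 + ‖ξ‖ ^ 2) ^ (l + 1) * (1 + t) ^ (-l - 3) := by
    rw [E0_of_lt hlt, E1_of_lt hlt]
    exact (cos_multiplier_sub_sq_le hl hξ ht).trans (by gcongr; linarith)
  have h₁ : (E1 ζ t ξ - exp (-t / (2 * ‖ξ‖ ^ 2)) * (sin (t * ‖ξ‖) / ‖ξ‖)) ^ 2 ≤
      c * (1 + ‖ξ‖ ^ 2) ^ l * (1 + t) ^ (-l - 3) := by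
    rw [E1_of_lt hlt]
    exact (sin_multiplier_sub_sq_le (l := l) (by linarith) hξ ht).trans (by gcongr; linarith)
  rw [uhatC_sub_waveC]
  calc _ ≤ (‖v₀ ξ‖ * |E0 ζ t ξ + 1 / (2 * (1 + ‖ξ‖ ^ 2)) * E1 ζ t ξ -
          exp (-t / (2 * ‖ξ‖ ^ 2)) * cos (t * ‖ξ‖)| +
        ‖v₁ ξ‖ * |E1 ζ t ξ - exp (-t / (2 * ‖ξ‖ ^ 2)) * (sin (t * ‖ξ‖) / ‖ξ‖)|) ^ 2 := by
        gcongr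
        refine (norm_add_le _ _).trans_eq ?_
        simp only [norm_mul, Complex.norm_real, Real.norm_eq_abs]
    _ ≤ 2 * (‖v₀ ξ‖ ^ 2 * (c * (1 + ‖ξ‖ ^ 2) ^ (l + 1) * (1 + t) ^ (-l - 3)) +
        ‖v₁ ξ‖ ^ 2 * (c * (1 + ‖ξ‖ ^ 2) ^ l * (1 + t) ^ (-l - 3))) := by
        refine add_sq_le.trans ?_
        simp only [mul_pow, sq_abs]
        gcongr
    _ = _ := by unfold highFreqConst; ring

lemma HNormC_sq (l : ℝ) (v : Rn n → ℂ) :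
    HNormC l v ^ 2 = ∫ ξ : Rn n, (1 + ‖ξ‖ ^ 2) ^ l * ‖v ξ‖ ^ 2 := by
  rw [HNormC, ← rpow_natCast, ← rpow_mul (integral_nonneg fun ξ => by positivity)]
  norm_num

end FourierSide

end DampedPlate

theorem stmt_3_general (n : ℕ) (l : ℝ) (hl : 0 ≤ l)
    (ζ : ℝ) (hζ : zetaCond ζ) :
    ∃ C > (0 : ℝ), ∀ v₀ v₁ : Rn n → ℂ,
      MemHC (l + 1) v₀ → MemHC l v₁ →
      ∀ t : ℝ, 0 ≤ t →
        (∫ ξ in {ξ : Rn n | 1 ≤ ‖ξ‖}, ‖uhatC ζ v₀ v₁ t ξ - waveC v₀ v₁ t ξ‖ ^ 2) ≤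
          C * (HNormC l v₁ ^ 2 + HNormC (l + 1) v₀ ^ 2) * (1 + t) ^ (-l - 3) := by
  have hK := highFreqConst_pos (l := l) (by linarith)
  refine ⟨highFreqConst l, hK, fun v₀ v₁ h₀ h₁ t ht => ?_⟩
  set g : Rn n → ℝ := fun ξ => highFreqConst l * ((1 + ‖ξ‖ ^ 2) ^ l * ‖v₁ ξ‖ ^ 2 +
    (1 + ‖ξ‖ ^ 2) ^ (l + 1) * ‖v₀ ξ‖ ^ 2) * (1 + t) ^ (-l - 3)
  have hg : Integrable g := ((h₁.add h₀).const_mul _).mul_const _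
  have hS : MeasurableSet {ξ : Rn n | 1 ≤ ‖ξ‖} := measurableSet_le measurable_const measurable_norm
  calc _ ≤ ∫ ξ in {ξ : Rn n | 1 ≤ ‖ξ‖}, g ξ :=
        integral_mono_of_nonneg (.of_forall fun ξ => by positivity) hg.restrict <|
          (ae_restrict_iff' hS).2 <| .of_forall fun ξ hξ =>
            norm_uhatC_sub_waveC_sq_le (by linarith) hζ.2.1 hξ ht v₀ v₁
    _ ≤ ∫ ξ, g ξ := setIntegral_le_integral hg (.of_forall fun ξ => by positivity)
    _ = _ := by rw [integral_mul_const, integral_const_mul, integral_add h₁ h₀, HNormC_sq, HNormC_sq]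

/-- **Lemma 4.1** (high-frequency estimate). Stated on the Fourier side: `v₀ = û₀ ∈ H^{l+1}`,
`v₁ = û₁ ∈ H^l` (i.e. their weighted squares are integrable). -/
theorem stmt_3 (n : ℕ) (hn : 1 ≤ n) (l : ℝ) (hl : 0 ≤ l)
    (ζ : ℝ) (hζ : zetaCond ζ) :
    ∃ C > (0 : ℝ), ∀ v₀ v₁ : Rn n → ℂ,
      MemHC (l + 1) v₀ → MemHC l v₁ →
      ∀ t : ℝ, 0 ≤ t →
        (∫ ξ in {ξ : Rn n | 1 ≤ ‖ξ‖}, ‖uhatC ζ v₀ v₁ t ξ - waveC v₀ v₁ t ξ‖ ^ 2) ≤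
          C * (HNormC l v₁ ^ 2 + HNormC (l + 1) v₀ ^ 2) * (1 + t) ^ (-l - 3) :=
  stmt_3_general n l hl ζ hζ
end
end

section
/- Let n ≥ 1 be an integer, let ζ ∈ (0,1) be the unique positive real with 4ζ²(1+ζ²)² = 1, and let δ ∈ (0,ζ). Suppose u₀, u₁ ∈ L²(ℝⁿ). Then there exist constants C > 0 and η > 0, independent of t, u₀ and u₁, such that for all t ≥ 0, ∫_{δ < |ξ| < 1} |û(t,ξ)|² dξ ≤ C·( ‖u₀‖²_{L²} + ‖u₁‖²_{L²} )·e^{−ηt}. -/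
open MeasureTheory Real Set

noncomputable section

open DampedPlate

/-! On the Fourier side the equation becomes `(1+|ξ|²) ÿ + ẏ + |ξ|²(1+|ξ|²) y = 0`, whose
characteristic roots have real part at most `-ρ(ξ)` with
`ρ(ξ) = (1 - √(1 - 4|ξ|²(1+|ξ|²)²)) / (2(1+|ξ|²))`.
For `δ ≤ |ξ| ≤ 1` this rate is at least `δ²/2`, so `|E₀| ≤ e^{-δ²t/2}` and `|E₁| ≤ t e^{-δ²t/2}`;
the factor `t` is absorbed by halving the rate. This gives a pointwise bound
`|û(t,ξ)|² ≤ C e^{-δ²t/2} (|û₀(ξ)|² + |û₁(ξ)|²)` on the middle frequencies, which is integrated. -/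

namespace Real

lemma cosh_le_exp_abs (x : ℝ) : cosh x ≤ exp |x| := by
  rw [← cosh_abs, cosh_eq]
  linarith [exp_le_exp.mpr (show -|x| ≤ |x| by linarith [abs_nonneg x])]

lemma sinh_le_mul_exp (x : ℝ) : sinh x ≤ x * exp x := by
  have h : exp (-x) = exp x * exp (-(2 * x)) := by rw [← exp_add]; ring_nf
  rw [sinh_eq]
  nlinarith [exp_pos x, add_one_le_exp (-(2 * x))]

lemma abs_sin_mul_div_le {t : ℝ} (ht : 0 ≤ t) (b : ℝ) : |sin (t * b) / b| ≤ t := by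
  rcases eq_or_ne b 0 with rfl | hb
  · simpa using ht
  rw [abs_div, div_le_iff₀ (abs_pos.mpr hb)]
  calc |sin (t * b)| ≤ |t * b| := abs_sin_le_abs
    _ = t * |b| := by rw [abs_mul, abs_of_nonneg ht]

lemma sinh_mul_div_le {t b : ℝ} (ht : 0 ≤ t) (hb : 0 ≤ b) :
    sinh (t * b) / b ≤ t * exp (t * b) := by
  rcases hb.eq_or_lt with rfl | hb
  · simpa using mul_nonneg ht (exp_nonneg 0)
  rw [div_le_iff₀ hb]
  calc sinh (t * b) ≤ t * b * exp (t * b) := sinh_le_mul_exp _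
    _ = t * exp (t * b) * b := by ring

lemma mul_exp_neg_two_mul_le {a : ℝ} (ha : 0 < a) (t : ℝ) :
    t * exp (-(2 * a) * t) ≤ a⁻¹ * exp (-a * t) := by
  have hmax : t * exp (-a * t) ≤ a⁻¹ := by
    have h := mul_exp_neg_le_exp_neg_one (a * t)
    rw [← neg_mul] at h
    rw [← one_div, le_div_iff₀' ha]
    linarith [exp_le_one_iff.mpr (show (-1 : ℝ) ≤ 0 by norm_num)]
  calc t * exp (-(2 * a) * t) = t * exp (-a * t) * exp (-a * t) := by
        rw [mul_assoc, ← exp_add]; ring_nf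
    _ ≤ a⁻¹ * exp (-a * t) := mul_le_mul_of_nonneg_right hmax (exp_nonneg _)

end Real

open Real

section

variable {t A s ρ : ℝ}

lemma neg_div_add_mul_div_le (ht : 0 ≤ t) (hρ : ρ ≤ (1 - s) / A) :
    -t / A + t * s / A ≤ -ρ * t := by
  have := mul_le_mul_of_nonneg_left hρ ht
  calc -t / A + t * s / A = -(t * ((1 - s) / A)) := by ring
    _ ≤ -ρ * t := by linarith

lemma neg_div_le_neg_mul (ht : 0 ≤ t) (hρ : ρ ≤ 1 / A) : -t / A ≤ -ρ * t := by
  simpa using neg_div_add_mul_div_le (s := 0) ht (by simpa using hρ)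

lemma abs_exp_neg_div_mul_cos_le (ht : 0 ≤ t) (hρ : ρ ≤ 1 / A) (x : ℝ) :
    |exp (-t / A) * cos x| ≤ exp (-ρ * t) := by
  rw [abs_mul, abs_of_pos (exp_pos _)]
  calc exp (-t / A) * |cos x| ≤ exp (-t / A) * 1 := by gcongr; exact abs_cos_le_one x
    _ ≤ exp (-ρ * t) := by rw [mul_one]; exact exp_le_exp.mpr (neg_div_le_neg_mul ht hρ)

lemma abs_exp_neg_div_mul_sin_div_le (ht : 0 ≤ t) (hρ : ρ ≤ 1 / A) :
    |exp (-t / A) * (sin (t * s / A) / (s / A))| ≤ t * exp (-ρ * t) := by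
  rw [abs_mul, abs_of_pos (exp_pos _), mul_div_assoc, mul_comm t (exp _)]
  exact mul_le_mul (exp_le_exp.mpr (neg_div_le_neg_mul ht hρ)) (abs_sin_mul_div_le ht _)
    (abs_nonneg _) (exp_nonneg _)

lemma abs_exp_neg_div_mul_cosh_le (ht : 0 ≤ t) (hs : 0 ≤ s) (hA : 0 ≤ A)
    (hρ : ρ ≤ (1 - s) / A) : |exp (-t / A) * cosh (t * s / A)| ≤ exp (-ρ * t) := by
  rw [abs_of_pos (mul_pos (exp_pos _) (cosh_pos _))]
  calc exp (-t / A) * cosh (t * s / A) ≤ exp (-t / A) * exp (t * s / A) := by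
        gcongr
        simpa [abs_of_nonneg (by positivity : 0 ≤ t * s / A)] using cosh_le_exp_abs (t * s / A)
    _ = exp (-t / A + t * s / A) := (exp_add _ _).symm
    _ ≤ exp (-ρ * t) := exp_le_exp.mpr (neg_div_add_mul_div_le ht hρ)

lemma abs_exp_neg_div_mul_sinh_div_le (ht : 0 ≤ t) (hs : 0 ≤ s) (hA : 0 ≤ A)
    (hρ : ρ ≤ (1 - s) / A) :
    |exp (-t / A) * (sinh (t * s / A) / (s / A))| ≤ t * exp (-ρ * t) := by
  have hsinh : 0 ≤ sinh (t * (s / A)) := sinh_nonneg_iff.mpr (by positivity)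
  rw [mul_div_assoc, abs_of_nonneg (by positivity)]
  calc exp (-t / A) * (sinh (t * (s / A)) / (s / A))
        ≤ exp (-t / A) * (t * exp (t * (s / A))) := by
        gcongr
        exact sinh_mul_div_le ht (by positivity)
    _ = t * exp (-t / A + t * s / A) := by rw [exp_add, mul_div_assoc]; ring
    _ ≤ t * exp (-ρ * t) := by gcongr; exact neg_div_add_mul_div_le ht hρ

end

namespace DampedPlate

variable {n : ℕ}

lemma zetaCond.four_mul_sq_lt_one {ζ : ℝ} (hζ : zetaCond ζ) : 4 * ζ ^ 2 < 1 := by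
  obtain ⟨hζ0, -, hζeq⟩ := hζ
  nlinarith [pow_pos hζ0 2, pow_pos hζ0 4]

/-- Since `√` of a negative number is `0`, this is `-Re λ` for the slower characteristic root `λ`
both in the overdamped and in the oscillatory regime. -/
def decayRate (ξ : Rn n) : ℝ :=
  (1 - √(1 - 4 * ‖ξ‖ ^ 2 * (1 + ‖ξ‖ ^ 2) ^ 2)) / (2 * (1 + ‖ξ‖ ^ 2))

lemma decayRate_le (ξ : Rn n) : decayRate ξ ≤ 1 / (2 * (1 + ‖ξ‖ ^ 2)) := by
  unfold decayRate
  gcongr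
  linarith [sqrt_nonneg (1 - 4 * ‖ξ‖ ^ 2 * (1 + ‖ξ‖ ^ 2) ^ 2)]

lemma sq_div_two_le_decayRate {δ : ℝ} {ξ : Rn n} (hδξ : δ ^ 2 ≤ ‖ξ‖ ^ 2) (hξ : ‖ξ‖ ≤ 1)
    (hδ : 2 * δ ^ 2 ≤ 1) : δ ^ 2 / 2 ≤ decayRate ξ := by
  have hsqrt : √(1 - 4 * ‖ξ‖ ^ 2 * (1 + ‖ξ‖ ^ 2) ^ 2) ≤ 1 - 2 * δ ^ 2 := by
    rw [Real.sqrt_le_left (by linarith)]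
    nlinarith [sq_nonneg ‖ξ‖, mul_nonneg (sq_nonneg ‖ξ‖) (sq_nonneg ‖ξ‖)]
  have hξ2 : ‖ξ‖ ^ 2 ≤ 1 := by nlinarith [norm_nonneg ξ]
  unfold decayRate
  rw [le_div_iff₀ (by positivity)]
  nlinarith [mul_le_mul_of_nonneg_left hξ2 (sq_nonneg δ)]

variable {ζ t : ℝ} {ξ : Rn n}

lemma abs_E0_le (ht : 0 ≤ t) : |E0 ζ t ξ| ≤ exp (-decayRate ξ * t) := by
  unfold E0
  split_ifs
  · exact abs_exp_neg_div_mul_cos_le ht (decayRate_le ξ) _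
  · exact abs_exp_neg_div_mul_cosh_le ht (sqrt_nonneg _) (by positivity) le_rfl

lemma abs_E1_le (ht : 0 ≤ t) : |E1 ζ t ξ| ≤ t * exp (-decayRate ξ * t) := by
  unfold E1
  split_ifs
  · exact abs_exp_neg_div_mul_sin_div_le ht (decayRate_le ξ)
  · exact abs_exp_neg_div_mul_sinh_div_le ht (sqrt_nonneg _) (by positivity) le_rfl

lemma norm_uhatC_le {M : ℝ} (v₀ v₁ : Rn n → ℂ) (h₀ : |E0 ζ t ξ| ≤ M) (h₁ : |E1 ζ t ξ| ≤ M) :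
    ‖uhatC ζ v₀ v₁ t ξ‖ ≤ M * (2 * ‖v₀ ξ‖ + ‖v₁ ξ‖) := by
  have hc : ‖(((1 : ℝ) / (2 * (1 + ‖ξ‖ ^ 2)) : ℝ) : ℂ)‖ ≤ 1 := by
    rw [Complex.norm_real, Real.norm_of_nonneg (by positivity), div_le_one (by positivity)]
    nlinarith [sq_nonneg ‖ξ‖]
  have hM : 0 ≤ M := (abs_nonneg _).trans h₀
  unfold uhatC
  calc _ ≤ ‖v₀ ξ‖ * |E0 ζ t ξ| + (‖v₁ ξ‖ + ‖v₀ ξ‖ * 1) * |E1 ζ t ξ| := by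
        refine (norm_add_le _ _).trans ?_
        rw [norm_mul, norm_mul, Complex.norm_real, Complex.norm_real, Real.norm_eq_abs,
          Real.norm_eq_abs]
        gcongr
        refine (norm_add_le _ _).trans ?_
        rw [norm_mul]
        gcongr
    _ ≤ ‖v₀ ξ‖ * M + (‖v₁ ξ‖ + ‖v₀ ξ‖ * 1) * M := by gcongr
    _ = M * (2 * ‖v₀ ξ‖ + ‖v₁ ξ‖) := by ring

lemma norm_uhatC_sq_le {δ : ℝ} (v₀ v₁ : Rn n → ℂ) (hδ : 0 < δ) (h2δ : 2 * δ ^ 2 ≤ 1)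
    (ht : 0 ≤ t) (hδξ : δ ≤ ‖ξ‖) (hξ : ‖ξ‖ ≤ 1) :
    ‖uhatC ζ v₀ v₁ t ξ‖ ^ 2 ≤
      5 * (1 + 4 / δ ^ 2) ^ 2 * exp (-(δ ^ 2 / 2) * t) * (‖v₀ ξ‖ ^ 2 + ‖v₁ ξ‖ ^ 2) := by
  set M := (1 + 4 / δ ^ 2) * exp (-(δ ^ 2 / 4) * t) with hM
  have hrate : exp (-decayRate ξ * t) ≤ exp (-(2 * (δ ^ 2 / 4)) * t) := by
    have := sq_div_two_le_decayRate (pow_le_pow_left₀ hδ.le hδξ 2) hξ h2δ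
    exact exp_le_exp.mpr (by nlinarith)
  have h₀ : |E0 ζ t ξ| ≤ M :=
    calc |E0 ζ t ξ| ≤ exp (-decayRate ξ * t) := abs_E0_le ht
      _ ≤ exp (-(2 * (δ ^ 2 / 4)) * t) := hrate
      _ ≤ exp (-(δ ^ 2 / 4) * t) := exp_le_exp.mpr (by nlinarith)
      _ ≤ M := le_mul_of_one_le_left (exp_nonneg _) (le_add_of_nonneg_right (by positivity))
  have h₁ : |E1 ζ t ξ| ≤ M :=
    calc |E1 ζ t ξ| ≤ t * exp (-decayRate ξ * t) := abs_E1_le ht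
      _ ≤ t * exp (-(2 * (δ ^ 2 / 4)) * t) := by gcongr
      _ ≤ (δ ^ 2 / 4)⁻¹ * exp (-(δ ^ 2 / 4) * t) := mul_exp_neg_two_mul_le (by positivity) t
      _ ≤ M := by rw [inv_div, hM]; gcongr; linarith
  calc ‖uhatC ζ v₀ v₁ t ξ‖ ^ 2 ≤ (M * (2 * ‖v₀ ξ‖ + ‖v₁ ξ‖)) ^ 2 := by
        gcongr; exact norm_uhatC_le v₀ v₁ h₀ h₁
    _ ≤ M ^ 2 * (5 * (‖v₀ ξ‖ ^ 2 + ‖v₁ ξ‖ ^ 2)) := by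
        rw [mul_pow]; gcongr; nlinarith [sq_nonneg (‖v₀ ξ‖ - 2 * ‖v₁ ξ‖)]
    _ = 5 * (1 + 4 / δ ^ 2) ^ 2 * exp (-(δ ^ 2 / 2) * t) * (‖v₀ ξ‖ ^ 2 + ‖v₁ ξ‖ ^ 2) := by
        rw [hM, mul_pow, sq (exp _), ← exp_add]; ring_nf

end DampedPlate

lemma MeasureTheory.setIntegral_le_mul_integral {α : Type*} [MeasurableSpace α] {μ : Measure α}
    {s : Set α} {f g : α → ℝ} {c : ℝ} (hs : MeasurableSet s) (hf : 0 ≤ f) (hg : Integrable g μ)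
    (hg0 : 0 ≤ g) (hc : 0 ≤ c) (hfg : ∀ x ∈ s, f x ≤ c * g x) :
    ∫ x in s, f x ∂μ ≤ c * ∫ x, g x ∂μ :=
  calc ∫ x in s, f x ∂μ ≤ ∫ x in s, c * g x ∂μ :=
        integral_mono_of_nonneg (.of_forall hf) (hg.const_mul c).integrableOn
          ((ae_restrict_iff' hs).2 (.of_forall hfg))
    _ = c * ∫ x in s, g x ∂μ := integral_const_mul c _
    _ ≤ c * ∫ x, g x ∂μ :=
        mul_le_mul_of_nonneg_left (setIntegral_le_integral hg (.of_forall hg0)) hc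

/-- The data enter through their Fourier transforms `v₀ = û₀`, `v₁ = û₁`. -/
theorem stmt_5_general (n : ℕ) (ζ δ : ℝ) (hζ : zetaCond ζ)
    (hδ : 0 < δ) (hδζ : δ < ζ) :
    ∃ C > (0 : ℝ), ∃ η > (0 : ℝ), ∀ v₀ v₁ : Rn n → ℂ,
      MemLp v₀ 2 (volume : Measure (Rn n)) → MemLp v₁ 2 (volume : Measure (Rn n)) →
      ∀ t : ℝ, 0 ≤ t →
        (∫ ξ in {ξ : Rn n | δ < ‖ξ‖ ∧ ‖ξ‖ < 1}, ‖uhatC ζ v₀ v₁ t ξ‖ ^ 2) ≤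
          C * ((∫ ξ : Rn n, ‖v₀ ξ‖ ^ 2) + ∫ ξ : Rn n, ‖v₁ ξ‖ ^ 2) * Real.exp (-η * t) := by
  have h2δ : 2 * δ ^ 2 ≤ 1 := by nlinarith [hζ.four_mul_sq_lt_one]
  refine ⟨5 * (1 + 4 / δ ^ 2) ^ 2, by positivity, δ ^ 2 / 2, by positivity, ?_⟩
  intro v₀ v₁ hv₀ hv₁ t ht
  have hsq {v : Rn n → ℂ} (hv : MemLp v 2 volume) : Integrable fun ξ ↦ ‖v ξ‖ ^ 2 :=
    (memLp_two_iff_integrable_sq_norm hv.1).1 hv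
  have hS : MeasurableSet {ξ : Rn n | δ < ‖ξ‖ ∧ ‖ξ‖ < 1} :=
    (measurableSet_lt measurable_const measurable_norm).inter
      (measurableSet_lt measurable_norm measurable_const)
  calc (∫ ξ in {ξ : Rn n | δ < ‖ξ‖ ∧ ‖ξ‖ < 1}, ‖uhatC ζ v₀ v₁ t ξ‖ ^ 2)
      ≤ 5 * (1 + 4 / δ ^ 2) ^ 2 * exp (-(δ ^ 2 / 2) * t) * ∫ ξ, (‖v₀ ξ‖ ^ 2 + ‖v₁ ξ‖ ^ 2) :=
        setIntegral_le_mul_integral hS (fun _ ↦ by positivity) ((hsq hv₀).add (hsq hv₁))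
          (fun _ ↦ by positivity) (by positivity)
          fun ξ hξ ↦ norm_uhatC_sq_le v₀ v₁ hδ h2δ ht hξ.1.le hξ.2.le
    _ = _ := by rw [integral_add (hsq hv₀) (hsq hv₁)]; ring

/-- **Lemma 4.3** (middle-frequency estimate). Stated on the Fourier side: `v₀ = û₀`, `v₁ = û₁`
are the Fourier transforms of the `L²` data. -/
theorem stmt_5 (n : ℕ) (hn : 1 ≤ n) (ζ δ : ℝ) (hζ : zetaCond ζ)
    (hδ : 0 < δ) (hδζ : δ < ζ) :
    ∃ C > (0 : ℝ), ∃ η > (0 : ℝ), ∀ v₀ v₁ : Rn n → ℂ,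
      MemLp v₀ 2 (volume : Measure (Rn n)) → MemLp v₁ 2 (volume : Measure (Rn n)) →
      ∀ t : ℝ, 0 ≤ t →
        (∫ ξ in {ξ : Rn n | δ < ‖ξ‖ ∧ ‖ξ‖ < 1}, ‖uhatC ζ v₀ v₁ t ξ‖ ^ 2) ≤
          C * ((∫ ξ : Rn n, ‖v₀ ξ‖ ^ 2) + ∫ ξ : Rn n, ‖v₁ ξ‖ ^ 2) * Real.exp (-η * t) :=
  stmt_5_general n ζ δ hζ hδ hδζ
end
end

section
/- Let n ≥ 1 and suppose u₀, u₁ ∈ L²(ℝⁿ). Then there exist constants C > 0 and η ∈ (0,1), independent of t, u₀ and u₁, such that for all t ≥ 0, ∫_{|ξ| ≤ 1} | û₁(ξ)·e^{−t/(2|ξ|²)}·sin(t|ξ|)/|ξ| + û₀(ξ)·e^{−t/(2|ξ|²)}·cos(t|ξ|) |² dξ ≤ C·( ‖u₁‖²_{L²} + ‖u₀‖²_{L²} )·e^{−ηt}. -/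
open MeasureTheory Real Set

noncomputable section

open DampedPlate


/-!
On `0 < |ξ| ≤ 1` we have `e^{-t/(2|ξ|²)} ≤ e^{-t/2}` and `|sin(t|ξ|)/|ξ|| ≤ t`, while
`t e^{-t/2} ≤ 4 e^{-t/4}`; so both multipliers of the wave-like profile are at most `4 e^{-t/4}`,
and integrating the squared pointwise bound gives the estimate with `C = 32`, `η = 1/2`.
For `n ≥ 1` the origin, where the multipliers degenerate, is a null set.
-/

lemma mul_exp_neg_div_two_le (t : ℝ) : t * exp (-t / 2) ≤ 4 * exp (-t / 4) := by
  have ht : t ≤ 4 * exp (t / 4) := by linarith [add_one_le_exp (t / 4)]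
  calc t * exp (-t / 2) ≤ 4 * exp (t / 4) * exp (-t / 2) := by gcongr
    _ = 4 * exp (-t / 4) := by rw [mul_assoc, ← exp_add]; ring_nf

lemma abs_sin_mul_div_le (t r : ℝ) : |sin (t * r) / r| ≤ |t| := by
  rcases eq_or_ne r 0 with rfl | hr
  · simp
  rw [abs_div, div_le_iff₀ (abs_pos.2 hr), ← abs_mul]
  exact abs_sin_le_abs

lemma exp_neg_div_two_mul_sq_le {t r : ℝ} (ht : 0 ≤ t) (hr : 0 < r) (hr1 : r ≤ 1) :
    exp (-t / (2 * r ^ 2)) ≤ exp (-t / 2) := by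
  gcongr exp ?_
  rw [neg_div, neg_div, neg_le_neg_iff]
  gcongr
  nlinarith

lemma abs_exp_mul_sin_div_le {t r : ℝ} (ht : 0 ≤ t) (hr : 0 < r) (hr1 : r ≤ 1) :
    |exp (-t / (2 * r ^ 2)) * (sin (t * r) / r)| ≤ 4 * exp (-t / 4) :=
  calc |exp (-t / (2 * r ^ 2)) * (sin (t * r) / r)|
      = exp (-t / (2 * r ^ 2)) * |sin (t * r) / r| := by rw [abs_mul, abs_of_pos (exp_pos _)]
    _ ≤ exp (-t / 2) * t :=
        mul_le_mul (exp_neg_div_two_mul_sq_le ht hr hr1)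
          ((abs_sin_mul_div_le t r).trans_eq (abs_of_nonneg ht)) (abs_nonneg _) (exp_pos _).le
    _ ≤ 4 * exp (-t / 4) := by rw [mul_comm]; exact mul_exp_neg_div_two_le t

lemma abs_exp_mul_cos_le {t r : ℝ} (ht : 0 ≤ t) (hr : 0 < r) (hr1 : r ≤ 1) :
    |exp (-t / (2 * r ^ 2)) * cos (t * r)| ≤ 4 * exp (-t / 4) :=
  calc |exp (-t / (2 * r ^ 2)) * cos (t * r)|
      = exp (-t / (2 * r ^ 2)) * |cos (t * r)| := by rw [abs_mul, abs_of_pos (exp_pos _)]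
    _ ≤ exp (-t / 2) * 1 :=
        mul_le_mul (exp_neg_div_two_mul_sq_le ht hr hr1) (abs_cos_le_one _) (abs_nonneg _)
          (exp_pos _).le
    _ ≤ 4 * exp (-t / 4) := by
        rw [mul_one]
        have : exp (-t / 2) ≤ exp (-t / 4) := exp_le_exp.2 (by linarith)
        linarith [exp_pos (-t / 4)]

lemma norm_mul_add_mul_sq_le {R : Type*} [SeminormedRing R] {a b x y : R} {M : ℝ}
    (hx : ‖x‖ ≤ M) (hy : ‖y‖ ≤ M) :
    ‖a * x + b * y‖ ^ 2 ≤ 2 * M ^ 2 * (‖a‖ ^ 2 + ‖b‖ ^ 2) := by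
  have hM : 0 ≤ M := (norm_nonneg x).trans hx
  have h : ‖a * x + b * y‖ ≤ ‖a‖ * M + ‖b‖ * M :=
    (norm_add_le _ _).trans <| add_le_add
      ((norm_mul_le _ _).trans (by gcongr)) ((norm_mul_le _ _).trans (by gcongr))
  calc ‖a * x + b * y‖ ^ 2 ≤ (‖a‖ * M + ‖b‖ * M) ^ 2 := by gcongr
    _ ≤ 2 * M ^ 2 * (‖a‖ ^ 2 + ‖b‖ ^ 2) := by nlinarith [sq_nonneg (‖a‖ - ‖b‖)]

lemma norm_waveC_sq_le {n : ℕ} (v₀ v₁ : Rn n → ℂ) {t : ℝ} (ht : 0 ≤ t) {ξ : Rn n}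
    (hξ0 : ξ ≠ 0) (hξ1 : ‖ξ‖ ≤ 1) :
    ‖waveC v₀ v₁ t ξ‖ ^ 2 ≤ 32 * exp (-(1 / 2) * t) * (‖v₁ ξ‖ ^ 2 + ‖v₀ ξ‖ ^ 2) := by
  have hξ : 0 < ‖ξ‖ := norm_pos_iff.2 hξ0
  have hsq : (4 * exp (-t / 4)) ^ 2 = 16 * exp (-(1 / 2) * t) := by
    rw [mul_pow, ← exp_nat_mul]; ring_nf
  calc ‖waveC v₀ v₁ t ξ‖ ^ 2 ≤ 2 * (4 * exp (-t / 4)) ^ 2 * (‖v₁ ξ‖ ^ 2 + ‖v₀ ξ‖ ^ 2) := by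
        refine norm_mul_add_mul_sq_le ?_ ?_ <;> rw [Complex.norm_real, norm_eq_abs]
        · exact abs_exp_mul_sin_div_le ht hξ hξ1
        · exact abs_exp_mul_cos_le ht hξ hξ1
    _ = 32 * exp (-(1 / 2) * t) * (‖v₁ ξ‖ ^ 2 + ‖v₀ ξ‖ ^ 2) := by rw [hsq]; ring

/-- Stated on the Fourier side: `v₀ = û₀`, `v₁ = û₁` are the Fourier transforms of the `L²` data. -/
theorem stmt_10 (n : ℕ) (hn : 1 ≤ n) :
    ∃ C > (0 : ℝ), ∃ η : ℝ, 0 < η ∧ η < 1 ∧ ∀ v₀ v₁ : Rn n → ℂ,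
      MemLp v₀ 2 (volume : Measure (Rn n)) → MemLp v₁ 2 (volume : Measure (Rn n)) →
      ∀ t : ℝ, 0 ≤ t →
        (∫ ξ in {ξ : Rn n | ‖ξ‖ ≤ 1}, ‖waveC v₀ v₁ t ξ‖ ^ 2) ≤
          C * ((∫ ξ : Rn n, ‖v₁ ξ‖ ^ 2) + ∫ ξ : Rn n, ‖v₀ ξ‖ ^ 2) * Real.exp (-η * t) := by
  have : Nonempty (Fin n) := ⟨⟨0, hn⟩⟩
  refine ⟨32, by norm_num, 1 / 2, by norm_num, by norm_num, fun v₀ v₁ h₀ h₁ t ht => ?_⟩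
  have hi₀ : Integrable fun ξ => ‖v₀ ξ‖ ^ 2 := h₀.integrable_norm_pow two_ne_zero
  have hi₁ : Integrable fun ξ => ‖v₁ ξ‖ ^ 2 := h₁.integrable_norm_pow two_ne_zero
  set g := fun ξ => 32 * exp (-(1 / 2) * t) * (‖v₁ ξ‖ ^ 2 + ‖v₀ ξ‖ ^ 2)
  have hg : Integrable g := (hi₁.add hi₀).const_mul _
  have hbound : ∀ᵐ ξ ∂volume.restrict {ξ : Rn n | ‖ξ‖ ≤ 1}, ‖waveC v₀ v₁ t ξ‖ ^ 2 ≤ g ξ := by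
    filter_upwards [ae_restrict_of_ae (volume.ae_ne 0),
      ae_restrict_mem (measurableSet_le measurable_norm measurable_const)] with ξ hξ0 hξ1
    exact norm_waveC_sq_le v₀ v₁ ht hξ0 hξ1
  calc (∫ ξ in {ξ : Rn n | ‖ξ‖ ≤ 1}, ‖waveC v₀ v₁ t ξ‖ ^ 2)
      ≤ ∫ ξ in {ξ : Rn n | ‖ξ‖ ≤ 1}, g ξ :=
        integral_mono_of_nonneg (ae_of_all _ fun _ => by positivity) hg.integrableOn hbound
    _ ≤ ∫ ξ, g ξ := setIntegral_le_integral hg (ae_of_all _ fun _ => by positivity)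
    _ = 32 * ((∫ ξ, ‖v₁ ξ‖ ^ 2) + ∫ ξ, ‖v₀ ξ‖ ^ 2) * exp (-(1 / 2) * t) := by
        rw [integral_const_mul, integral_add hi₁ hi₀]; ring
end
end
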